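/- arXiv:2005.13927 — 2 statements merged into one kernel-verified Lean document; each statement's English description precedes it below -/
import Mathlib

section
/- Let 𝔤 be the 2-dimensional Lie algebra with orthonormal basis {e₁,e₂}, bracket [e₁,e₂] = −λ⁻¹e₁, and U as above. Suppose K : 𝔤 × 𝔤 → 𝔤 is symmetric bilinear, self-adjoint (⟨K(X,Y),Z⟩ = ⟨Y,K(X,Z)⟩), and satisfies the total symmetry condition (∇^g_{e₁}K)(e₂,e₂) = (∇^g_{e₂}K)(e₁,e₂) and (∇^g_{e₁}K)(e₂,e₁) = (∇^g_{e₂}K)(e₁,e₁), where ∇^g_{e₁}e₁ = λ⁻¹e₂, ∇^g_{e₁}e₂ = −λ⁻¹e₁, ∇^g_{e₂}e₁ = ∇^g_{e₂}e₂ = 0. Then there exists p ∈ ℝ with K(e₁,e₁) = p e₂, K(e₁,e₂) = p e₁, K(e₂,e₂) = 2p e₂. -/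
/-!
Expanding in the orthonormal basis, `∇^g_{e₁}` is a quarter turn scaled by `λ⁻¹` and
`∇^g_{e₂} = 0`, so the two total symmetry conditions read
`∇^g_{e₁}(K(e₂,e₂)) + 2λ⁻¹ K(e₁,e₂) = 0` and `∇^g_{e₁}(K(e₁,e₂)) + λ⁻¹ (K(e₁,e₁) − K(e₂,e₂)) = 0`.
Self-adjointness and symmetry make `⟪K(X,Y),Z⟫` totally symmetric, so `K` has only four
components; pairing the two conditions with `e₁, e₂` gives three linear equations forcing
`⟪K(e₁,e₁),e₁⟫ = ⟪K(e₁,e₂),e₂⟫ = 0` and `⟪K(e₂,e₂),e₂⟫ = 2 ⟪K(e₁,e₁),e₂⟫`.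
-/

open scoped RealInnerProductSpace

open Submodule

section OrthonormalPair

variable {V : Type*} [NormedAddCommGroup V] [InnerProductSpace ℝ V] {e₁ e₂ : V}

theorem eq_inner_smul_add_inner_smul_of_span_pair (h11 : ⟪e₁, e₁⟫ = 1) (h22 : ⟪e₂, e₂⟫ = 1)
    (h12 : ⟪e₁, e₂⟫ = 0) (hspan : span ℝ ({e₁, e₂} : Set V) = ⊤) (v : V) :
    v = ⟪v, e₁⟫ • e₁ + ⟪v, e₂⟫ • e₂ := by
  obtain ⟨a, b, rfl⟩ := mem_span_pair.mp (hspan ▸ mem_top : v ∈ span ℝ ({e₁, e₂} : Set V))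
  simp only [inner_add_left, real_inner_smul_left, h11, h22, h12, real_inner_comm e₁ e₂]
  module

theorem inner_apply_of_quarter_turn (h11 : ⟪e₁, e₁⟫ = 1) (h22 : ⟪e₂, e₂⟫ = 1)
    (h12 : ⟪e₁, e₂⟫ = 0) (hspan : span ℝ ({e₁, e₂} : Set V) = ⊤) {J : V →ₗ[ℝ] V} {μ : ℝ}
    (hJ₁ : J e₁ = μ • e₂) (hJ₂ : J e₂ = -(μ • e₁)) (v : V) :
    ⟪J v, e₁⟫ = -(μ * ⟪v, e₂⟫) ∧ ⟪J v, e₂⟫ = μ * ⟪v, e₁⟫ := by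
  rw [eq_inner_smul_add_inner_smul_of_span_pair h11 h22 h12 hspan v]
  simp only [map_add, map_smul, hJ₁, hJ₂, inner_add_left, inner_neg_left, real_inner_smul_left,
    h11, h22, h12, real_inner_comm e₁ e₂]
  constructor <;> ring

theorem exists_eq_smul_of_quarter_turn_relations (h11 : ⟪e₁, e₁⟫ = 1) (h22 : ⟪e₂, e₂⟫ = 1)
    (h12 : ⟪e₁, e₂⟫ = 0) (hspan : span ℝ ({e₁, e₂} : Set V) = ⊤) {J : V →ₗ[ℝ] V} {μ : ℝ}
    (hμ : μ ≠ 0) (hJ₁ : J e₁ = μ • e₂) (hJ₂ : J e₂ = -(μ • e₁)) {k₁₁ k₁₂ k₂₂ : V}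
    (hsym₁ : ⟪k₁₂, e₁⟫ = ⟪k₁₁, e₂⟫) (hsym₂ : ⟪k₂₂, e₁⟫ = ⟪k₁₂, e₂⟫)
    (hrel₁ : J k₂₂ + (2 * μ) • k₁₂ = 0) (hrel₂ : J k₁₂ + μ • (k₁₁ - k₂₂) = 0) :
    ∃ p : ℝ, k₁₁ = p • e₂ ∧ k₁₂ = p • e₁ ∧ k₂₂ = (2 * p) • e₂ := by
  have hrot := inner_apply_of_quarter_turn h11 h22 h12 hspan hJ₁ hJ₂
  have eq₁ : 2 * ⟪k₁₂, e₁⟫ = ⟪k₂₂, e₂⟫ := by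
    have h := congrArg (⟪·, e₁⟫) hrel₁
    simp only [inner_add_left, real_inner_smul_left, (hrot _).1, inner_zero_left] at h
    exact mul_left_cancel₀ hμ (by linear_combination h)
  have eq₂ : ⟪k₂₂, e₁⟫ + 2 * ⟪k₁₂, e₂⟫ = 0 := by
    have h := congrArg (⟪·, e₂⟫) hrel₁
    simp only [inner_add_left, real_inner_smul_left, (hrot _).2, inner_zero_left] at h
    exact mul_left_cancel₀ hμ (by linear_combination h)
  have eq₃ : ⟪k₁₁, e₁⟫ = ⟪k₂₂, e₁⟫ + ⟪k₁₂, e₂⟫ := by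
    have h := congrArg (⟪·, e₁⟫) hrel₂
    simp only [inner_add_left, inner_sub_left, real_inner_smul_left, (hrot _).1,
      inner_zero_left] at h
    exact mul_left_cancel₀ hμ (by linear_combination h)
  have hexp := eq_inner_smul_add_inner_smul_of_span_pair h11 h22 h12 hspan
  refine ⟨⟪k₁₁, e₂⟫, (hexp _).trans ?_, (hexp _).trans ?_, (hexp _).trans ?_⟩
  · rw [show ⟪k₁₁, e₁⟫ = 0 by linarith, zero_smul, zero_add]
  · rw [hsym₁, show ⟪k₁₂, e₂⟫ = 0 by linarith, zero_smul, add_zero]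
  · rw [show ⟪k₂₂, e₁⟫ = 0 by linarith, show ⟪k₂₂, e₂⟫ = 2 * ⟪k₁₁, e₂⟫ by linarith,
      zero_smul, zero_add]

end OrthonormalPair

/-- Let `𝔤` be the 2-dimensional Lie algebra with orthonormal basis `{e₁,e₂}`, bracket
`[e₁,e₂] = −λ⁻¹e₁`, and Levi-Civita connection `∇^g` given on the basis by
`∇^g_{e₁}e₁ = λ⁻¹e₂`, `∇^g_{e₁}e₂ = −λ⁻¹e₁`, `∇^g_{e₂}e₁ = ∇^g_{e₂}e₂ = 0`.
Suppose `K` is symmetric bilinear, self-adjoint, and satisfies the total symmetry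
conditions `(∇^g_{e₁}K)(e₂,e₂) = (∇^g_{e₂}K)(e₁,e₂)` and
`(∇^g_{e₁}K)(e₂,e₁) = (∇^g_{e₂}K)(e₁,e₁)`, where
`(∇^g_X K)(Y,Z) = ∇^g_X(K(Y,Z)) − K(∇^g_X Y, Z) − K(Y, ∇^g_X Z)`.
Then there exists `p ∈ ℝ` with `K(e₁,e₁) = p e₂`, `K(e₁,e₂) = p e₁`,
`K(e₂,e₂) = 2p e₂`. -/
theorem stmt18 (V : Type*) [NormedAddCommGroup V] [InnerProductSpace ℝ V]
    (e₁ e₂ : V) (lam : ℝ) (hlam : 0 < lam)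
    (h11 : ⟪e₁, e₁⟫ = 1) (h22 : ⟪e₂, e₂⟫ = 1) (h12 : ⟪e₁, e₂⟫ = 0)
    (hspan : Submodule.span ℝ ({e₁, e₂} : Set V) = ⊤)
    (lc K : V →ₗ[ℝ] V →ₗ[ℝ] V)
    (hlc11 : lc e₁ e₁ = lam⁻¹ • e₂) (hlc12 : lc e₁ e₂ = -(lam⁻¹ • e₁))
    (hlc21 : lc e₂ e₁ = 0) (hlc22 : lc e₂ e₂ = 0)
    (hKsym : ∀ X Y, K X Y = K Y X)
    (hKsa : ∀ X Y Z, ⟪K X Y, Z⟫ = ⟪Y, K X Z⟫)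
    (cdK : V → V → V → V)
    (hcdK : ∀ X Y Z, cdK X Y Z = lc X (K Y Z) - K (lc X Y) Z - K Y (lc X Z))
    (hts1 : cdK e₁ e₂ e₂ = cdK e₂ e₁ e₂)
    (hts2 : cdK e₁ e₂ e₁ = cdK e₂ e₁ e₁) :
    ∃ p : ℝ, K e₁ e₁ = p • e₂ ∧ K e₁ e₂ = p • e₁ ∧ K e₂ e₂ = (2 * p) • e₂ := by
  have hlc₂ : lc e₂ = 0 := by
    refine LinearMap.ext_on hspan ?_
    rintro v (rfl | rfl) <;> simp [hlc21, hlc22]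
  have hcod₁ : lc e₁ (K e₂ e₂) + (2 * lam⁻¹) • K e₁ e₂ = 0 := by
    simp only [hcdK, hlc₂, hlc12, hKsym e₂ e₁, LinearMap.zero_apply, map_zero, map_neg,
      map_smul, LinearMap.neg_apply, LinearMap.smul_apply] at hts1
    linear_combination (norm := module) hts1
  have hcod₂ : lc e₁ (K e₁ e₂) + lam⁻¹ • (K e₁ e₁ - K e₂ e₂) = 0 := by
    simp only [hcdK, hlc₂, hlc11, hlc12, hKsym e₂ e₁, LinearMap.zero_apply, map_zero, map_neg,
      map_smul, LinearMap.neg_apply, LinearMap.smul_apply] at hts2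
    linear_combination (norm := module) hts2
  have hsym₁ : ⟪K e₁ e₂, e₁⟫ = ⟪K e₁ e₁, e₂⟫ := by rw [hKsa, real_inner_comm]
  have hsym₂ : ⟪K e₂ e₂, e₁⟫ = ⟪K e₁ e₂, e₂⟫ := by rw [hKsa, hKsym e₂ e₁, real_inner_comm]
  exact exists_eq_smul_of_quarter_turn_relations h11 h22 h12 hspan (inv_ne_zero hlam.ne')
    hlc11 hlc12 hsym₁ hsym₂ hcod₁ hcod₂
end

section
/- For the statistical Lie group structure on the space of normal distributions (λ = √2), the left-invariant connections ∇^(α) defined in the orthonormal frame {e₁, e₂} by ∇^(α)_{e₁}e₁ = ((1−α)/√2)e₂, ∇^(α)_{e₁}e₂ = −((1+α)/√2)e₁, ∇^(α)_{e₂}e₁ = −(α/√2)e₁, ∇^(α)_{e₂}e₂ = −(√2 α)e₂ coincide, under e₁ = y∂_x and e₂ = (y/√2)∂_y, with the Amari–Chentsov α-connections: ∇^(α)_{∂x}∂x = ((1−α)/(2y))∂y, ∇^(α)_{∂x}∂y = ∇^(α)_{∂y}∂x = −((1+α)/y)∂x, ∇^(α)_{∂y}∂y = −((1+2α)/y)∂y.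 -/
open scoped BigOperators

/-- Partial derivative in the `i`-th coordinate on `ℝ × ℝ`. -/
noncomputable def pder (i : Fin 2) (f : ℝ × ℝ → ℝ) (p : ℝ × ℝ) : ℝ :=
  if i = 0 then deriv (fun t => f (t, p.2)) p.1 else deriv (fun t => f (p.1, t)) p.2

/-- The Christoffel symbols of the Amari–Chentsov `α`-connection on
`M = ℝ × ℝ⁺` with the Fisher metric: `∇^(α)_{∂x}∂x = ((1−α)/(2y))∂y`,
`∇^(α)_{∂x}∂y = ∇^(α)_{∂y}∂x = −((1+α)/y)∂x`, `∇^(α)_{∂y}∂y = −((1+2α)/y)∂y`. -/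
noncomputable def amariChristoffel (α : ℝ) (k i j : Fin 2) (p : ℝ × ℝ) : ℝ :=
  if k = 1 ∧ i = 0 ∧ j = 0 then (1 - α) / (2 * p.2)
  else if k = 0 ∧ ((i = 0 ∧ j = 1) ∨ (i = 1 ∧ j = 0)) then -((1 + α) / p.2)
  else if k = 1 ∧ i = 1 ∧ j = 1 then -((1 + 2 * α) / p.2)
  else 0

/-- The covariant derivative `(∇^(α)_V W)^k = V^i ∂_i W^k + Γ^k_{ij} V^i W^j`. -/
noncomputable def amariCovDeriv (α : ℝ) (Vf Wf : ℝ × ℝ → Fin 2 → ℝ) (p : ℝ × ℝ) :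
    Fin 2 → ℝ :=
  fun k => (∑ i : Fin 2, Vf p i * pder i (fun q => Wf q k) p) +
    ∑ i : Fin 2, ∑ j : Fin 2, amariChristoffel α k i j p * Vf p i * Wf p j

/-- The orthonormal frame `e₁ = y ∂_x` for the Fisher metric. -/
noncomputable def eOne : ℝ × ℝ → Fin 2 → ℝ := fun p => ![p.2, 0]

/-- The orthonormal frame `e₂ = (y/√2) ∂_y` for the Fisher metric. -/
noncomputable def eTwo : ℝ × ℝ → Fin 2 → ℝ := fun p => ![0, p.2 / Real.sqrt 2]

/-! The frame fields are `y • a` with constant `a`, i.e. left-invariant fields of the affine group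
structure on `M`. For two such fields the derivative term of `∇_V W` is `a₁ • (y • b)`, and
since the Christoffel symbols are homogeneous of degree `-1` in `y`, the quadratic term
`Γ(y a, y b)` is again `y` times a constant. Hence `∇_{y a}(y b) = y • c(a, b)` with `c` bilinear,
and the four frame formulas are evaluations of `c`. -/

/-- Stated with `y ^ 2` so that it also holds at `y = 0`, where division returns `0`. -/
theorem sq_mul_amariChristoffel (α : ℝ) (k i j : Fin 2) (p : ℝ × ℝ) :
    p.2 ^ 2 * amariChristoffel α k i j p = p.2 * amariChristoffel α k i j (0, 1) := by
  rcases eq_or_ne p.2 0 with hy | hy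
  · simp [hy]
  · unfold amariChristoffel
    split_ifs <;> field_simp
    ring

theorem pder_snd_mul_const (i : Fin 2) (c : ℝ) (p : ℝ × ℝ) :
    pder i (fun q => q.2 * c) p = if i = 0 then 0 else c := by
  unfold pder
  split_ifs <;> simp

theorem amariCovDeriv_snd_smul (α : ℝ) (a b : Fin 2 → ℝ) (p : ℝ × ℝ) :
    amariCovDeriv α (fun q => q.2 • a) (fun q => q.2 • b) p =
      p.2 • ![-(1 + α) * a 0 * b 1 - α * a 1 * b 0,
        (1 - α) / 2 * a 0 * b 0 - 2 * α * a 1 * b 1] := by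
  have hΓ : ∀ k i j, amariChristoffel α k i j p * (p.2 * a i) * (p.2 * b j) =
      p.2 * (amariChristoffel α k i j (0, 1) * a i * b j) := fun k i j => by
    linear_combination (a i * b j) * sq_mul_amariChristoffel α k i j p
  funext k
  simp only [amariCovDeriv, Pi.smul_apply, smul_eq_mul, pder_snd_mul_const, hΓ, Fin.sum_univ_two]
  fin_cases k <;> simp [amariChristoffel] <;> ring

theorem eOne_eq : eOne = fun q => q.2 • ![1, 0] := by
  funext q k
  fin_cases k <;> simp [eOne]

theorem eTwo_eq : eTwo = fun q => q.2 • ![0, (Real.sqrt 2)⁻¹] := by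
  funext q k
  fin_cases k <;> simp [eTwo, div_eq_mul_inv]

theorem stmt19_general (α : ℝ) (p : ℝ × ℝ) :
    amariCovDeriv α eOne eOne p = ((1 - α) / Real.sqrt 2) • eTwo p ∧
    amariCovDeriv α eOne eTwo p = (-((1 + α) / Real.sqrt 2)) • eOne p ∧
    amariCovDeriv α eTwo eOne p = (-(α / Real.sqrt 2)) • eOne p ∧
    amariCovDeriv α eTwo eTwo p = (-(Real.sqrt 2 * α)) • eTwo p := by
  rw [eOne_eq, eTwo_eq]
  simp only [amariCovDeriv_snd_smul]
  refine ⟨?_, ?_, ?_, ?_⟩ <;> funext k <;> fin_cases k <;> simp <;> field_simp <;>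
    grind [Real.sq_sqrt]

/-- The Amari–Chentsov `α`-connections, expressed in the orthonormal frame
`e₁ = y∂_x`, `e₂ = (y/√2)∂_y` of the Fisher metric (`λ = √2`), satisfy
`∇^(α)_{e₁}e₁ = ((1−α)/√2)e₂`, `∇^(α)_{e₁}e₂ = −((1+α)/√2)e₁`,
`∇^(α)_{e₂}e₁ = −(α/√2)e₁`, `∇^(α)_{e₂}e₂ = −(√2 α)e₂`; i.e. the left-invariant
connection given by these frame formulas coincides with the coordinate expression of
the Amari–Chentsov `α`-connection. -/
theorem stmt19 (α : ℝ) (p : ℝ × ℝ) (hp : 0 < p.2) :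
    amariCovDeriv α eOne eOne p = ((1 - α) / Real.sqrt 2) • eTwo p ∧
    amariCovDeriv α eOne eTwo p = (-((1 + α) / Real.sqrt 2)) • eOne p ∧
    amariCovDeriv α eTwo eOne p = (-(α / Real.sqrt 2)) • eOne p ∧
    amariCovDeriv α eTwo eTwo p = (-(Real.sqrt 2 * α)) • eTwo p :=
  stmt19_general α p
end
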